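/- Weighted subject expansion for system U: if Φ' derives Γ ⊢ t' : τ in system U and t →w t', then there is a derivation Φ of Γ ⊢ t : τ in system U with |Φ| > |Φ'|. -/

import Mathlib

/-! # The Bang Calculus Revisited: common definitions.

Terms are represented with de Bruijn indices, so that all the meta-level
substitutions are capture-avoiding by construction. -/

/-- Terms of the λ!-calculus.  `esub t u` is the explicit substitution
`t[0\u]`: the (anonymous) binder scopes over `t`, not over `u`. -/
inductive Tm : Type
  | var : ℕ → Tm
  | app : Tm → Tm → Tm
  | lam : Tm → Tm
  | bang : Tm → Tm
  | der : Tm → Tm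
  | esub : Tm → Tm → Tm
  deriving DecidableEq

namespace Tm

/-- lifting a renaming under a binder -/
def liftR (f : ℕ → ℕ) : ℕ → ℕ
  | 0 => 0
  | k + 1 => f k + 1

/-- renaming of free variables -/
def rename (f : ℕ → ℕ) : Tm → Tm
  | var k => var (f k)
  | app t u => app (rename f t) (rename f u)
  | lam t => lam (rename (liftR f) t)
  | bang t => bang (rename f t)
  | der t => der (rename f t)
  | esub t u => esub (rename (liftR f) t) (rename f u)

/-- lifting a simultaneous substitution under a binder -/
def liftS (σ : ℕ → Tm) : ℕ → Tm
  | 0 => var 0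
  | k + 1 => rename (· + 1) (σ k)

/-- simultaneous (capture-avoiding) substitution -/
def subst (σ : ℕ → Tm) : Tm → Tm
  | var k => σ k
  | app t u => app (subst σ t) (subst σ u)
  | lam t => lam (subst (liftS σ) t)
  | bang t => bang (subst σ t)
  | der t => der (subst σ t)
  | esub t u => esub (subst (liftS σ) t) (subst σ u)

/-- capture-avoiding substitution of `u` for the variable `0` of `t`,
where the result is placed under `n` extra binders (and `u` already lives
at that depth). -/
def substIn (n : ℕ) (u : Tm) (t : Tm) : Tm :=
  subst (fun k => match k with
    | 0 => u
    | k + 1 => var (k + n)) t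

/-- capture-avoiding meta-level substitution `t{0 := u}` -/
def subst0 (u : Tm) (t : Tm) : Tm := substIn 0 u t

/-- plugging a term into a list context `L ::= ◻ | L[x\t]`; the head of the
list is the argument of the outermost explicit substitution. -/
def plug : List Tm → Tm → Tm
  | [], s => s
  | e :: L, s => esub (plug L s) e

/-- the w-size of a term -/
def wsize : Tm → ℕ
  | var _ => 0
  | app t u => 1 + wsize t + wsize u
  | lam t => 1 + wsize t
  | bang _ => 0
  | der t => 1 + wsize t
  | esub t u => 1 + wsize t + wsize u

end Tm

/-- the names of the three rewriting rules of the λ!-calculus -/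
inductive Rule : Type
  | dB | sb | db
  deriving DecidableEq

open Tm in
/-- the three rewriting rules, applied at the root (at a distance) -/
inductive Root : Rule → Tm → Tm → Prop
  | dB (L : List Tm) (t u : Tm) :
      Root .dB (app (plug L (lam t)) u)
               (plug L (esub t (rename (· + L.length) u)))
  | sb (L : List Tm) (t u : Tm) :
      Root .sb (esub t (plug L (bang u))) (plug L (substIn L.length u t))
  | db (L : List Tm) (t : Tm) :
      Root .db (der (plug L (bang t))) (plug L t)

/-- closure of each rule under weak contexts (no reduction under `bang`) -/
inductive Step : Rule → Tm → Tm → Prop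
  | root {r : Rule} {t t' : Tm} : Root r t t' → Step r t t'
  | appL {r t t'} (u : Tm) : Step r t t' → Step r (Tm.app t u) (Tm.app t' u)
  | appR {r u u'} (t : Tm) : Step r u u' → Step r (Tm.app t u) (Tm.app t u')
  | lam {r t t'} : Step r t t' → Step r (Tm.lam t) (Tm.lam t')
  | der {r t t'} : Step r t t' → Step r (Tm.der t) (Tm.der t')
  | esubL {r t t'} (u : Tm) : Step r t t' → Step r (Tm.esub t u) (Tm.esub t' u)
  | esubR {r u u'} (t : Tm) : Step r u u' → Step r (Tm.esub t u) (Tm.esub t u')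

/-- the weak reduction `→w` of the λ!-calculus -/
def StepW (t t' : Tm) : Prop := ∃ r, Step r t t'

/-- counted weak reduction: `RedCnt t (b, e) u` holds iff `t →w* u` using `b`
dB-steps and `e` steps of kind s!/d!. -/
inductive RedCnt : Tm → ℕ × ℕ → Tm → Prop
  | refl (t : Tm) : RedCnt t (0, 0) t
  | db {t t₁ u : Tm} {b e : ℕ} :
      Step .dB t t₁ → RedCnt t₁ (b, e) u → RedCnt t (b + 1, e) u
  | ex {t t₁ u : Tm} {b e : ℕ} :
      (Step .sb t t₁ ∨ Step .db t t₁) → RedCnt t₁ (b, e) u →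
      RedCnt t (b, e + 1) u

mutual
  /-- neutral w-normal terms -/
  inductive NeW : Tm → Prop
    | var (k : ℕ) : NeW (Tm.var k)
    | app {t u : Tm} : NaW t → NoW u → NeW (Tm.app t u)
    | der {t : Tm} : NbW t → NeW (Tm.der t)
    | esub {t u : Tm} : NeW t → NbW u → NeW (Tm.esub t u)
  /-- neutral-abs w-normal terms -/
  inductive NaW : Tm → Prop
    | bang (t : Tm) : NaW (Tm.bang t)
    | ne {t : Tm} : NeW t → NaW t
    | esub {t u : Tm} : NaW t → NbW u → NaW (Tm.esub t u)
  /-- neutral-bang w-normal terms -/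
  inductive NbW : Tm → Prop
    | ne {t : Tm} : NeW t → NbW t
    | lam {t : Tm} : NoW t → NbW (Tm.lam t)
    | esub {t u : Tm} : NbW t → NbW u → NbW (Tm.esub t u)
  /-- w-normal terms -/
  inductive NoW : Tm → Prop
    | na {t : Tm} : NaW t → NoW t
    | nb {t : Tm} : NbW t → NoW t
end

/-- clashes -/
inductive Clash : Tm → Prop
  | appBang (L : List Tm) (t u : Tm) : Clash (Tm.app (Tm.plug L (Tm.bang t)) u)
  | esubLam (L : List Tm) (t u : Tm) : Clash (Tm.esub t (Tm.plug L (Tm.lam u)))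
  | derLam (L : List Tm) (u : Tm) : Clash (Tm.der (Tm.plug L (Tm.lam u)))
  | appLam (L : List Tm) (t u : Tm) : Clash (Tm.app t (Tm.plug L (Tm.lam u)))

/-- `WSub t s` holds iff `t = W⟨s⟩` for some weak context `W` -/
inductive WSub : Tm → Tm → Prop
  | refl (t : Tm) : WSub t t
  | appL {t s : Tm} (u : Tm) : WSub t s → WSub (Tm.app t u) s
  | appR {u s : Tm} (t : Tm) : WSub u s → WSub (Tm.app t u) s
  | lam {t s : Tm} : WSub t s → WSub (Tm.lam t) s
  | der {t s : Tm} : WSub t s → WSub (Tm.der t) s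
  | esubL {t s : Tm} (u : Tm) : WSub t s → WSub (Tm.esub t u) s
  | esubR {u s : Tm} (t : Tm) : WSub u s → WSub (Tm.esub t u) s

/-- weak clash freeness -/
def Wcf (t : Tm) : Prop := ¬ ∃ s, WSub t s ∧ Clash s

mutual
  /-- neutral weak clash free normal terms -/
  inductive NeCF : Tm → Prop
    | var (k : ℕ) : NeCF (Tm.var k)
    | app {t u : Tm} : NeCF t → NaCF u → NeCF (Tm.app t u)
    | der {t : Tm} : NeCF t → NeCF (Tm.der t)
    | esub {t u : Tm} : NeCF t → NeCF u → NeCF (Tm.esub t u)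
  /-- neutral-abs weak clash free normal terms -/
  inductive NaCF : Tm → Prop
    | bang (t : Tm) : NaCF (Tm.bang t)
    | ne {t : Tm} : NeCF t → NaCF t
    | esub {t u : Tm} : NaCF t → NeCF u → NaCF (Tm.esub t u)
  /-- neutral-bang weak clash free normal terms -/
  inductive NbCF : Tm → Prop
    | ne {t : Tm} : NeCF t → NbCF t
    | lam {t : Tm} : NoCF t → NbCF (Tm.lam t)
    | esub {t u : Tm} : NbCF t → NeCF u → NbCF (Tm.esub t u)
  /-- weak clash free normal terms -/
  inductive NoCF : Tm → Prop
    | na {t : Tm} : NaCF t → NoCF t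
    | nb {t : Tm} : NbCF t → NoCF t
end

/-- Types of system 𝒰: base types, multiset types and arrow types.  A
multiset type is given by a list of types (a representative of the multiset
it determines). -/
inductive Ty : Type
  | base : ℕ → Ty
  | mult : List Ty → Ty
  | arr : List Ty → Ty → Ty

/-- typing contexts: functions from (de Bruijn) variables to multiset types -/
abbrev Ctx := ℕ → Multiset Ty

/-- the context mapping `k` to `M` and anything else to the empty multiset -/
def Ctx.single (k : ℕ) (M : Multiset Ty) : Ctx := fun j => if j = k then M else 0

/-- removing the (type of the) bound variable `0` from a context -/
def Ctx.tail (Γ : Ctx) : Ctx := fun k => Γ (k + 1)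

/-- extending a context with a multiset type for a fresh variable `0` -/
def Ctx.cons (M : Multiset Ty) (Γ : Ctx) : Ctx := fun k =>
  match k with
  | 0 => M
  | k + 1 => Γ k

/-- Sized typing of system 𝒰: `DerU Γ t τ n` means that there is a derivation
of `Γ ⊢ t : τ` whose size (number of rules, not counting `bg`) is `n`. -/
inductive DerU : Ctx → Tm → Ty → ℕ → Prop
  | ax (k : ℕ) (σ : Ty) : DerU (Ctx.single k {σ}) (Tm.var k) σ 1
  | app {Γ Δ : Ctx} {t u : Tm} {M : List Ty} {τ : Ty} {n m : ℕ} :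
      DerU Γ t (Ty.arr M τ) n → DerU Δ u (Ty.mult M) m →
      DerU (Γ + Δ) (Tm.app t u) τ (n + m + 1)
  | abs {Γ : Ctx} {t : Tm} {τ : Ty} {n : ℕ} (M : List Ty) :
      DerU Γ t τ n → Multiset.ofList M = Γ 0 →
      DerU (Ctx.tail Γ) (Tm.lam t) (Ty.arr M τ) (n + 1)
  | es {Γ Δ : Ctx} {t u : Tm} {σ : Ty} {M : List Ty} {n m : ℕ} :
      DerU Γ t σ n → DerU Δ u (Ty.mult M) m → Multiset.ofList M = Γ 0 →
      DerU (Ctx.tail Γ + Δ) (Tm.esub t u) σ (n + m + 1)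
  | bg {t : Tm} (prs : List (Ctx × Ty × ℕ)) :
      (∀ p ∈ prs, DerU p.1 t p.2.1 p.2.2) →
      DerU ((prs.map (·.1)).sum) (Tm.bang t)
           (Ty.mult (prs.map (·.2.1))) ((prs.map (·.2.2)).sum)
  | dr {Γ : Ctx} {t : Tm} {σ : Ty} {n : ℕ} :
      DerU Γ t (Ty.mult [σ]) n → DerU Γ (Tm.der t) σ (n + 1)

/-! ## The source λ-calculus with explicit substitutions (CBN / CBV) -/

/-- terms of the λ-calculus with explicit substitutions (de Bruijn) -/
inductive Lm : Type
  | var : ℕ → Lm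
  | app : Lm → Lm → Lm
  | lam : Lm → Lm
  | esub : Lm → Lm → Lm
  deriving DecidableEq

namespace Lm

def liftR (f : ℕ → ℕ) : ℕ → ℕ
  | 0 => 0
  | k + 1 => f k + 1

def rename (f : ℕ → ℕ) : Lm → Lm
  | var k => var (f k)
  | app t u => app (rename f t) (rename f u)
  | lam t => lam (rename (liftR f) t)
  | esub t u => esub (rename (liftR f) t) (rename f u)

def liftS (σ : ℕ → Lm) : ℕ → Lm
  | 0 => var 0
  | k + 1 => rename (· + 1) (σ k)

def subst (σ : ℕ → Lm) : Lm → Lm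
  | var k => σ k
  | app t u => app (subst σ t) (subst σ u)
  | lam t => lam (subst (liftS σ) t)
  | esub t u => esub (subst (liftS σ) t) (subst σ u)

def substIn (n : ℕ) (u : Lm) (t : Lm) : Lm :=
  subst (fun k => match k with
    | 0 => u
    | k + 1 => var (k + n)) t

/-- capture-avoiding meta-level substitution `t{0 := u}` -/
def subst0 (u : Lm) (t : Lm) : Lm := substIn 0 u t

def plug : List Lm → Lm → Lm
  | [], s => s
  | e :: L, s => esub (plug L s) e

/-- values -/
def IsVal : Lm → Prop
  | var _ => True
  | lam _ => True
  | _ => False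

/-- the n-size of a term -/
def nsize : Lm → ℕ
  | var _ => 0
  | lam t => 1 + nsize t
  | app t _ => 1 + nsize t
  | esub t _ => 1 + nsize t

/-- the v-size of a term -/
def vsize : Lm → ℕ
  | var _ => 0
  | lam _ => 0
  | app t u => 1 + vsize t + vsize u
  | esub t u => 1 + vsize t + vsize u

end Lm

/-- names of the CBN rules -/
inductive NRule : Type
  | dB | s
  deriving DecidableEq

/-- call-by-name reduction (closure of dB and s under CBN contexts) -/
inductive StepN : NRule → Lm → Lm → Prop
  | dB (L : List Lm) (t u : Lm) :
      StepN .dB (Lm.app (Lm.plug L (Lm.lam t)) u)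
                (Lm.plug L (Lm.esub t (Lm.rename (· + L.length) u)))
  | s (t u : Lm) : StepN .s (Lm.esub t u) (Lm.subst0 u t)
  | appL {r t t'} (u : Lm) : StepN r t t' → StepN r (Lm.app t u) (Lm.app t' u)
  | lam {r t t'} : StepN r t t' → StepN r (Lm.lam t) (Lm.lam t')
  | esubL {r t t'} (u : Lm) : StepN r t t' → StepN r (Lm.esub t u) (Lm.esub t' u)

/-- names of the CBV rules -/
inductive VRule : Type
  | dB | sv
  deriving DecidableEq

/-- call-by-value reduction (closure of dB and sv under CBV contexts) -/
inductive StepV : VRule → Lm → Lm → Prop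
  | dB (L : List Lm) (t u : Lm) :
      StepV .dB (Lm.app (Lm.plug L (Lm.lam t)) u)
                (Lm.plug L (Lm.esub t (Lm.rename (· + L.length) u)))
  | sv (L : List Lm) (t v : Lm) (hv : Lm.IsVal v) :
      StepV .sv (Lm.esub t (Lm.plug L v)) (Lm.plug L (Lm.substIn L.length v t))
  | appL {r t t'} (u : Lm) : StepV r t t' → StepV r (Lm.app t u) (Lm.app t' u)
  | appR {r u u'} (t : Lm) : StepV r u u' → StepV r (Lm.app t u) (Lm.app t u')
  | esubL {r t t'} (u : Lm) : StepV r t t' → StepV r (Lm.esub t u) (Lm.esub t' u)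
  | esubR {r u u'} (t : Lm) : StepV r u u' → StepV r (Lm.esub t u) (Lm.esub t u')

mutual
  /-- CBN neutral terms -/
  inductive NeN : Lm → Prop
    | var (k : ℕ) : NeN (Lm.var k)
    | app {t : Lm} (u : Lm) : NeN t → NeN (Lm.app t u)
  /-- CBN normal terms -/
  inductive NoN : Lm → Prop
    | lam {t : Lm} : NoN t → NoN (Lm.lam t)
    | ne {t : Lm} : NeN t → NoN t
end

mutual
  /-- CBV (substituted) variables -/
  inductive VrV : Lm → Prop
    | var (k : ℕ) : VrV (Lm.var k)
    | esub {t u : Lm} : VrV t → NeV u → VrV (Lm.esub t u)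
  /-- CBV neutral terms -/
  inductive NeV : Lm → Prop
    | app₁ {t u : Lm} : VrV t → NoV u → NeV (Lm.app t u)
    | app₂ {t u : Lm} : NeV t → NoV u → NeV (Lm.app t u)
    | esub {t u : Lm} : NeV t → NeV u → NeV (Lm.esub t u)
  /-- CBV normal terms -/
  inductive NoV : Lm → Prop
    | lam (t : Lm) : NoV (Lm.lam t)
    | vr {t : Lm} : VrV t → NoV t
    | ne {t : Lm} : NeV t → NoV t
    | esub {t u : Lm} : NoV t → NeV u → NoV (Lm.esub t u)
end

/-- counted CBN reduction, recording the number of dB- and s-steps -/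
inductive RedCntN : Lm → ℕ × ℕ → Lm → Prop
  | refl (t : Lm) : RedCntN t (0, 0) t
  | db {t t₁ u : Lm} {b e : ℕ} :
      StepN .dB t t₁ → RedCntN t₁ (b, e) u → RedCntN t (b + 1, e) u
  | s {t t₁ u : Lm} {b e : ℕ} :
      StepN .s t t₁ → RedCntN t₁ (b, e) u → RedCntN t (b, e + 1) u

/-- counted CBV reduction, recording the number of dB- and sv-steps -/
inductive RedCntV : Lm → ℕ × ℕ → Lm → Prop
  | refl (t : Lm) : RedCntV t (0, 0) t
  | db {t t₁ u : Lm} {b e : ℕ} :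
      StepV .dB t t₁ → RedCntV t₁ (b, e) u → RedCntV t (b + 1, e) u
  | sv {t t₁ u : Lm} {b e : ℕ} :
      StepV .sv t t₁ → RedCntV t₁ (b, e) u → RedCntV t (b, e + 1) u

/-- the CBN embedding into the λ!-calculus -/
def cbn : Lm → Tm
  | .var k => .var k
  | .lam t => .lam (cbn t)
  | .app t u => .app (cbn t) (.bang (cbn u))
  | .esub t u => .esub (cbn t) (.bang (cbn u))

/-- `deBang t = some s'` iff `t = L⟨!s⟩` and `s' = L⟨s⟩` -/
def deBang : Tm → Option Tm
  | .bang s => some s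
  | .esub t e => (deBang t).map (fun s => Tm.esub s e)
  | _ => none

/-- the CBV embedding into the λ!-calculus -/
def cbv : Lm → Tm
  | .var k => .bang (.var k)
  | .lam t => .bang (.lam (cbv t))
  | .app t u =>
      match deBang (cbv t) with
      | some r => Tm.app r (cbv u)
      | none => Tm.app (.der (cbv t)) (cbv u)
  | .esub t u => .esub (cbv t) (cbv u)

/-- Sized typing of system 𝒩 (call-by-name): `DerN Γ t τ n` means that there
is a derivation of `Γ ⊢ t : τ` of size `n` (counting all rules). -/
inductive DerN : Ctx → Lm → Ty → ℕ → Prop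
  | ax (k : ℕ) (σ : Ty) : DerN (Ctx.single k {σ}) (Lm.var k) σ 1
  | app {Γ : Ctx} {t u : Lm} {τ : Ty} {n : ℕ} (prs : List (Ctx × Ty × ℕ)) :
      DerN Γ t (Ty.arr (prs.map (·.2.1)) τ) n →
      (∀ p ∈ prs, DerN p.1 u p.2.1 p.2.2) →
      DerN (Γ + (prs.map (·.1)).sum) (Lm.app t u) τ
           (n + (prs.map (·.2.2)).sum + 1)
  | abs {Γ : Ctx} {t : Lm} {τ : Ty} {n : ℕ} (M : List Ty) :
      DerN Γ t τ n → Multiset.ofList M = Γ 0 →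
      DerN (Ctx.tail Γ) (Lm.lam t) (Ty.arr M τ) (n + 1)
  | es {Γ : Ctx} {t u : Lm} {τ : Ty} {n : ℕ} (prs : List (Ctx × Ty × ℕ)) :
      DerN Γ t τ n →
      Multiset.ofList (prs.map (·.2.1)) = Γ 0 →
      (∀ p ∈ prs, DerN p.1 u p.2.1 p.2.2) →
      DerN (Ctx.tail Γ + (prs.map (·.1)).sum) (Lm.esub t u) τ
           (n + (prs.map (·.2.2)).sum + 1)

/-- Sized typing of system 𝒱 (call-by-value): `DerV Γ t τ n` means that there
is a derivation of `Γ ⊢ t : τ` of size `n` (each rule counts 1, except that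
`ax` counts the cardinal of its multiset and `abs` contributes the sizes of
its premises plus the number of premises). -/
inductive DerV : Ctx → Lm → Ty → ℕ → Prop
  | ax (k : ℕ) (M : List Ty) :
      DerV (Ctx.single k (Multiset.ofList M)) (Lm.var k) (Ty.mult M) M.length
  | es {Γ Δ : Ctx} {t u : Lm} {σ : Ty} {M : List Ty} {n m : ℕ} :
      DerV Γ t σ n → DerV Δ u (Ty.mult M) m → Multiset.ofList M = Γ 0 →
      DerV (Ctx.tail Γ + Δ) (Lm.esub t u) σ (n + m + 1)
  | abs {t : Lm} (prs : List (Ctx × List Ty × Ty × ℕ)) :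
      (∀ p ∈ prs, DerV p.1 t p.2.2.1 p.2.2.2) →
      (∀ p ∈ prs, Multiset.ofList p.2.1 = p.1 0) →
      DerV ((prs.map (fun p => Ctx.tail p.1)).sum) (Lm.lam t)
           (Ty.mult (prs.map (fun p => Ty.arr p.2.1 p.2.2.1)))
           ((prs.map (·.2.2.2)).sum + prs.length)
  | app {Γ Δ : Ctx} {t u : Lm} {M : List Ty} {τ : Ty} {n m : ℕ} :
      DerV Γ t (Ty.mult [Ty.arr M τ]) n → DerV Δ u (Ty.mult M) m →
      DerV (Γ + Δ) (Lm.app t u) τ (n + m + 1)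


/-! Subject expansion is proved for each root rule and then lifted through weak contexts, where it
is immediate. For `d!`, the derivation of `L⟨t⟩` becomes one of `L⟨!t⟩` by a single-premise `bg`
rule, and `dr` adds one to the size. For `dB`, the `es` rule typing `t[x\u]` is split back into an
`abs` rule for `λx.t` and the derivation of `u`, and `app` adds one. For `s!`, an anti-substitution
lemma decomposes the derivation of `t{x:=u}` into one of `t`, in which each use of `x` is an axiom,
and one derivation of `u` per such axiom, gathered in a `bg` rule. Those axioms are counted while
`bg` is not, so the sizes balance and `es` adds one. -/

namespace Tm

theorem liftR_id : liftR id = id := by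
  funext k; cases k <;> rfl

theorem liftR_comp (f g : ℕ → ℕ) : liftR f ∘ liftR g = liftR (f ∘ g) := by
  funext k; cases k <;> rfl

theorem liftR_injective {f : ℕ → ℕ} (hf : f.Injective) : (liftR f).Injective := by
  rintro (_ | a) (_ | b) h <;> simp_all [liftR, hf.eq_iff]

theorem mem_range_of_succ_mem_range_liftR {f : ℕ → ℕ} {j : ℕ}
    (h : j + 1 ∈ Set.range (liftR f)) : j ∈ Set.range f := by
  obtain ⟨_ | k, hk⟩ := h
  · simp [liftR] at hk
  · exact ⟨k, by simpa [liftR] using hk⟩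

theorem rename_id (t : Tm) : rename id t = t := by
  induction t <;> simp_all [rename, liftR_id]

theorem rename_rename (t : Tm) (f g : ℕ → ℕ) :
    rename f (rename g t) = rename (f ∘ g) t := by
  induction t generalizing f g <;> simp_all [rename, liftR_comp]

/-- What the substitution `substIn n u` becomes under `i` binders. -/
def substAt (i n : ℕ) (u : Tm) : ℕ → Tm := fun k =>
  if k < i then var k else if k = i then rename (· + i) u else var (k - 1 + n)

theorem liftS_substAt (i n : ℕ) (u : Tm) : liftS (substAt i n u) = substAt (i + 1) n u := by
  funext k
  rcases k with _ | k
  · simp [liftS, substAt]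
  · rcases lt_trichotomy k i with h | rfl | h
    · simp [liftS, substAt, h, rename]
    · simp only [liftS, substAt, lt_irrefl, if_false, if_true, rename_rename]
      congr 1
    · simp only [liftS, substAt, show ¬ k < i by omega, show k ≠ i by omega,
        show ¬ k + 1 < i + 1 by omega, show k + 1 ≠ i + 1 by omega, if_false, rename]
      congr 1; omega

theorem substIn_eq_subst_substAt (n : ℕ) (u t : Tm) :
    substIn n u t = subst (substAt 0 n u) t := by
  unfold substIn
  congr 1
  funext k
  rcases k with _ | k
  · exact (rename_id u).symm
  · simp [substAt]

end Tm

namespace Ctx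

/-- The context of `rename (· + i) u` when `Δ` is that of `u`. -/
def shift (i : ℕ) (Δ : Ctx) : Ctx := fun j => if i ≤ j then Δ (j - i) else 0

/-- If `Γ` types `t`, then `substAt i n Γ + shift i Θ` types `t.subst (Tm.substAt i n u)`,
where `Θ` types the copies of `!u`. -/
def substAt (i n : ℕ) (Γ : Ctx) : Ctx := fun j =>
  if j < i then Γ j else if i + n ≤ j then Γ (j + 1 - n) else 0

theorem tail_add (Γ Δ : Ctx) : tail (Γ + Δ) = tail Γ + tail Δ := rfl

theorem single_comp {f : ℕ → ℕ} (hf : f.Injective) (k : ℕ) (M : Multiset Ty) :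
    single (f k) M ∘ f = single k M := by
  funext j
  simp [single, hf.eq_iff]

theorem shift_zero (Δ : Ctx) : shift 0 Δ = Δ := by
  funext j; simp [shift]

theorem shift_zero_right (i : ℕ) : shift i 0 = 0 := by
  funext j; simp [shift]

theorem shift_add (i : ℕ) (Δ Δ' : Ctx) : shift i (Δ + Δ') = shift i Δ + shift i Δ' := by
  funext j; simp only [shift, Pi.add_apply]; split_ifs <;> simp

theorem shift_succ_apply_zero (i : ℕ) (Δ : Ctx) : shift (i + 1) Δ 0 = 0 := by
  simp [shift]

theorem tail_shift_succ (i : ℕ) (Δ : Ctx) : tail (shift (i + 1) Δ) = shift i Δ := by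
  funext j
  simp only [tail, shift]
  split_ifs <;> first | rfl | (congr 1; omega)

theorem shift_comp_add {i : ℕ} {Δ : Ctx} (h : ∀ j < i, Δ j = 0) :
    shift i (Δ ∘ (· + i)) = Δ := by
  funext j
  simp only [shift, Function.comp_apply]
  split_ifs with hj
  · congr 1; omega
  · exact (h j (by omega)).symm

theorem substAt_zero_right (i n : ℕ) : substAt i n 0 = 0 := by
  funext j; simp only [substAt]; split_ifs <;> rfl

theorem substAt_add (i n : ℕ) (Γ Γ' : Ctx) :
    substAt i n (Γ + Γ') = substAt i n Γ + substAt i n Γ' := by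
  funext j; simp only [substAt, Pi.add_apply]; split_ifs <;> simp

theorem substAt_zero_zero (Γ : Ctx) : substAt 0 0 Γ = tail Γ := by
  funext j; simp [substAt, tail]

theorem substAt_succ_apply_zero (i n : ℕ) (Γ : Ctx) : substAt (i + 1) n Γ 0 = Γ 0 := by
  simp [substAt]

theorem substAt_zero_succ_apply_zero (n : ℕ) (Γ : Ctx) : substAt 0 (n + 1) Γ 0 = 0 := by
  simp [substAt]

theorem tail_substAt_succ (i n : ℕ) (Γ : Ctx) :
    tail (substAt (i + 1) n Γ) = substAt i n (tail Γ) := by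
  funext j
  simp only [tail, substAt]
  split_ifs <;> first | rfl | (congr 1; omega)

theorem tail_substAt_zero_succ (n : ℕ) (Γ : Ctx) :
    tail (substAt 0 (n + 1) Γ) = substAt 0 n Γ := by
  funext j
  simp only [tail, substAt]
  split_ifs <;> first | rfl | (congr 1; omega)

theorem substAt_single_self (i n : ℕ) (M : Multiset Ty) : substAt i n (single i M) = 0 := by
  funext j; simp only [substAt, single]
  split_ifs <;> first | rfl | omega

theorem substAt_single_of_lt {i k : ℕ} (n : ℕ) (M : Multiset Ty) (hk : k < i) :
    substAt i n (single k M) = single k M := by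
  funext j; simp only [substAt, single]
  split_ifs <;> first | rfl | omega

theorem substAt_single_of_gt {i k : ℕ} (n : ℕ) (M : Multiset Ty) (hk : i < k) :
    substAt i n (single k M) = single (k - 1 + n) M := by
  funext j; simp only [substAt, single]
  split_ifs <;> first | rfl | omega

end Ctx

namespace DerU

open Tm

@[elab_as_elim]
theorem bang_induction {t : Tm} {motive : Ctx → Ty → ℕ → Prop}
    (nil : motive 0 (.mult []) 0)
    (cons : ∀ {Γ Δ : Ctx} {σ : Ty} {M : List Ty} {n m : ℕ}, DerU Γ t σ n →
      DerU Δ (bang t) (.mult M) m → motive Δ (.mult M) m →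
      motive (Γ + Δ) (.mult (σ :: M)) (n + m))
    {Γ : Ctx} {τ : Ty} {n : ℕ} (h : DerU Γ (bang t) τ n) : motive Γ τ n := by
  cases h with
  | bg prs hprs =>
    induction prs with
    | nil => exact nil
    | cons p prs ih =>
      have hprs' : ∀ q ∈ prs, DerU q.1 t q.2.1 q.2.2 := fun q hq => hprs q (by simp [hq])
      exact cons (hprs p (by simp)) (bg prs hprs') (ih hprs')

theorem bang_nil (t : Tm) : DerU 0 (bang t) (.mult []) 0 := bg [] (by simp)

theorem bang_cons {Γ Δ : Ctx} {t : Tm} {σ : Ty} {M : List Ty} {n m : ℕ}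
    (ht : DerU Γ t σ n) (h : DerU Δ (bang t) (.mult M) m) :
    DerU (Γ + Δ) (bang t) (.mult (σ :: M)) (n + m) := by
  cases h with
  | bg prs hprs =>
    have := bg (t := t) ((Γ, σ, n) :: prs) (by simpa [ht] using hprs)
    simpa using this

theorem bang_singleton {Γ : Ctx} {t : Tm} {σ : Ty} {n : ℕ} (h : DerU Γ t σ n) :
    DerU Γ (bang t) (.mult [σ]) n := by
  simpa using bang_cons h (bang_nil t)

theorem bang_append {Γ Δ : Ctx} {t : Tm} {M N : List Ty} {n m : ℕ}
    (h₁ : DerU Γ (bang t) (.mult M) n) (h₂ : DerU Δ (bang t) (.mult N) m) :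
    DerU (Γ + Δ) (bang t) (.mult (M ++ N)) (n + m) := by
  cases h₁ with
  | bg prs₁ hprs₁ =>
    cases h₂ with
    | bg prs₂ hprs₂ =>
      have := bg (t := t) (prs₁ ++ prs₂) fun p hp => (List.mem_append.mp hp).elim (hprs₁ p) (hprs₂ p)
      simpa using this

end DerU

namespace DerU

open Tm

theorem of_rename {t : Tm} {f : ℕ → ℕ} (hf : f.Injective) {Δ : Ctx} {τ : Ty} {m : ℕ}
    (h : DerU Δ (rename f t) τ m) :
    DerU (Δ ∘ f) t τ m ∧ ∀ j ∉ Set.range f, Δ j = 0 := by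
  induction t generalizing f Δ τ m with
  | var k =>
    cases h with
    | ax =>
      refine ⟨by simpa [Ctx.single_comp hf] using ax k τ, fun j hj => ?_⟩
      simp only [Ctx.single, if_neg (fun hjk : j = f k => hj ⟨k, hjk.symm⟩)]
  | app t u iht ihu =>
    cases h with
    | app h₁ h₂ =>
      obtain ⟨d₁, v₁⟩ := iht hf h₁
      obtain ⟨d₂, v₂⟩ := ihu hf h₂
      exact ⟨app d₁ d₂, fun j hj => by simp [v₁ j hj, v₂ j hj]⟩
  | lam t ih =>
    cases h with
    | abs M h hM =>
      obtain ⟨d, v⟩ := ih (liftR_injective hf) h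
      exact ⟨abs M d hM, fun j hj => v (j + 1) (hj ∘ mem_range_of_succ_mem_range_liftR)⟩
  | bang t ih =>
    refine bang_induction ?_ ?_ h
    · exact ⟨bang_nil t, fun _ _ => rfl⟩
    · rintro Γ Δ σ M n m ht - ⟨d, v⟩
      obtain ⟨d₀, v₀⟩ := ih hf ht
      exact ⟨bang_cons d₀ d, fun j hj => by simp [v₀ j hj, v j hj]⟩
  | der t ih =>
    cases h with
    | dr h =>
      obtain ⟨d, v⟩ := ih hf h
      exact ⟨dr d, v⟩
  | esub t u iht ihu =>
    cases h with
    | es h₁ h₂ hM =>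
      obtain ⟨d₁, v₁⟩ := iht (liftR_injective hf) h₁
      obtain ⟨d₂, v₂⟩ := ihu hf h₂
      refine ⟨es d₁ d₂ hM, fun j hj => ?_⟩
      have h₀ := v₁ (j + 1) (hj ∘ mem_range_of_succ_mem_range_liftR)
      simp [Ctx.tail, h₀, v₂ j hj]

theorem of_rename_add {u : Tm} {i : ℕ} {Δ : Ctx} {τ : Ty} {m : ℕ}
    (h : DerU Δ (rename (· + i) u) τ m) :
    DerU (Δ ∘ (· + i)) u τ m ∧ Ctx.shift i (Δ ∘ (· + i)) = Δ := by
  obtain ⟨d, v⟩ := of_rename (add_left_injective i) h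
  exact ⟨d, Ctx.shift_comp_add fun j hj => v j fun ⟨k, hk⟩ => by simp only at hk; omega⟩

end DerU

namespace DerU

open Tm

/-- Each axiom typing the variable `i` in the derivation of `t` marks a place where a derivation
of `u` was; these are collected in a (size-free) `bg` derivation of `!u`. -/
theorem of_subst_substAt {n : ℕ} {u : Tm} {t : Tm} {i : ℕ} {Δ : Ctx} {τ : Ty} {m : ℕ}
    (h : DerU Δ (subst (substAt i n u) t) τ m) :
    ∃ (Γ Θ : Ctx) (M : List Ty) (a k : ℕ), DerU Γ t τ a ∧ DerU Θ (bang u) (.mult M) k ∧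
      ↑M = Γ i ∧ Δ = Ctx.substAt i n Γ + Ctx.shift i Θ ∧ m + M.length = a + k := by
  induction t generalizing i Δ τ m with
  | var k =>
    rcases lt_trichotomy k i with hk | rfl | hk
    · simp only [subst, substAt, if_pos hk] at h
      cases h
      refine ⟨_, 0, [], 1, 0, ax k τ, bang_nil u, ?_, ?_, rfl⟩
      · simp [Ctx.single, hk.ne']
      · rw [Ctx.substAt_single_of_lt n _ hk, Ctx.shift_zero_right, add_zero]
    · simp only [subst, substAt, lt_irrefl, if_false, if_true] at h
      obtain ⟨hu, hΔ⟩ := of_rename_add h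
      refine ⟨_, _, [τ], 1, m, ax k τ, bang_singleton hu, by simp [Ctx.single], ?_, add_comm m 1⟩
      rw [Ctx.substAt_single_self, zero_add, hΔ]
    · simp only [subst, substAt, if_neg hk.not_gt, if_neg hk.ne'] at h
      cases h
      refine ⟨_, 0, [], 1, 0, ax k τ, bang_nil u, ?_, ?_, rfl⟩
      · simp [Ctx.single, hk.ne]
      · rw [Ctx.substAt_single_of_gt n _ hk, Ctx.shift_zero_right, add_zero]
  | app t₁ t₂ ih₁ ih₂ =>
    cases h with
    | app h₁ h₂ =>
      obtain ⟨Γ₁, Θ₁, M₁, a₁, k₁, d₁, b₁, o₁, e₁, s₁⟩ := ih₁ h₁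
      obtain ⟨Γ₂, Θ₂, M₂, a₂, k₂, d₂, b₂, o₂, e₂, s₂⟩ := ih₂ h₂
      refine ⟨Γ₁ + Γ₂, Θ₁ + Θ₂, M₁ ++ M₂, a₁ + a₂ + 1, k₁ + k₂, app d₁ d₂, bang_append b₁ b₂,
        by simp [← o₁, ← o₂], ?_, by simp; omega⟩
      rw [e₁, e₂, Ctx.substAt_add, Ctx.shift_add]
      abel
  | lam t ih =>
    simp only [subst, liftS_substAt] at h
    cases h with
    | abs M h hM =>
      obtain ⟨Γ, Θ, N, a, k, d, b, o, e, s⟩ := ih h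
      have hΓ : ↑M = Γ 0 := by
        rw [hM, e, Pi.add_apply, Ctx.substAt_succ_apply_zero, Ctx.shift_succ_apply_zero, add_zero]
      refine ⟨Ctx.tail Γ, Θ, N, a + 1, k, abs M d hΓ, b, o, ?_, by omega⟩
      rw [e, Ctx.tail_add, Ctx.tail_substAt_succ, Ctx.tail_shift_succ]
  | bang t ih =>
    refine bang_induction ?_ ?_ h
    · exact ⟨0, 0, [], 0, 0, bang_nil t, bang_nil u, rfl,
        by rw [Ctx.substAt_zero_right, Ctx.shift_zero_right, add_zero], rfl⟩
    · rintro Δ₁ Δ₂ σ M m₁ m₂ h₁ - ⟨Γ₂, Θ₂, M₂, a₂, k₂, d₂, b₂, o₂, e₂, s₂⟩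
      obtain ⟨Γ₁, Θ₁, M₁, a₁, k₁, d₁, b₁, o₁, e₁, s₁⟩ := ih h₁
      refine ⟨Γ₁ + Γ₂, Θ₁ + Θ₂, M₁ ++ M₂, a₁ + a₂, k₁ + k₂, bang_cons d₁ d₂,
        bang_append b₁ b₂, by simp [← o₁, ← o₂], ?_, by simp; omega⟩
      rw [e₁, e₂, Ctx.substAt_add, Ctx.shift_add]
      abel
  | der t ih =>
    cases h with
    | dr h =>
      obtain ⟨Γ, Θ, M, a, k, d, b, o, e, s⟩ := ih h
      exact ⟨Γ, Θ, M, a + 1, k, dr d, b, o, e, by omega⟩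
  | esub t₁ t₂ ih₁ ih₂ =>
    simp only [subst, liftS_substAt] at h
    cases h with
    | @es _ _ _ _ _ N _ _ h₁ h₂ hM =>
      obtain ⟨Γ₁, Θ₁, M₁, a₁, k₁, d₁, b₁, o₁, e₁, s₁⟩ := ih₁ h₁
      obtain ⟨Γ₂, Θ₂, M₂, a₂, k₂, d₂, b₂, o₂, e₂, s₂⟩ := ih₂ h₂
      have hΓ₁ : ↑N = Γ₁ 0 := by
        rw [hM, e₁, Pi.add_apply, Ctx.substAt_succ_apply_zero, Ctx.shift_succ_apply_zero,
          add_zero]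
      refine ⟨Ctx.tail Γ₁ + Γ₂, Θ₁ + Θ₂, M₁ ++ M₂, a₁ + a₂ + 1, k₁ + k₂, es d₁ d₂ hΓ₁,
        bang_append b₁ b₂, by simp [← o₁, ← o₂, Ctx.tail], ?_, by simp; omega⟩
      rw [e₁, e₂, Ctx.tail_add, Ctx.tail_substAt_succ, Ctx.tail_shift_succ, Ctx.substAt_add,
        Ctx.shift_add]
      abel

end DerU

namespace DerU

open Tm

theorem of_plug_substIn (L : List Tm) {n : ℕ} {t u : Tm} {Δ : Ctx} {τ : Ty} {m : ℕ}
    (h : DerU Δ (plug L (substIn (L.length + n) u t)) τ m) :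
    ∃ (Γ Θ : Ctx) (M : List Ty) (a k : ℕ), DerU Γ t τ a ∧
      DerU Θ (plug L (bang u)) (.mult M) k ∧ ↑M = Γ 0 ∧ Δ = Ctx.substAt 0 n Γ + Θ ∧
      m + M.length = a + k := by
  induction L generalizing n Δ τ m with
  | nil =>
    rw [plug, List.length_nil, zero_add, substIn_eq_subst_substAt] at h
    obtain ⟨Γ, Θ, M, a, k, d, b, o, e, s⟩ := of_subst_substAt h
    exact ⟨Γ, Θ, M, a, k, d, b, o, by rwa [Ctx.shift_zero] at e, s⟩
  | cons e L ih =>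
    rw [plug, List.length_cons, add_right_comm, add_assoc] at h
    cases h with
    | @es _ Δ₂ _ _ _ N _ m₂ h₁ h₂ hN =>
      obtain ⟨Γ, Θ, M, a, k, d, b, o, hΔ, s⟩ := ih h₁
      have hΘ : ↑N = Θ 0 := by
        rw [hN, hΔ, Pi.add_apply, Ctx.substAt_zero_succ_apply_zero, zero_add]
      refine ⟨Γ, Ctx.tail Θ + Δ₂, M, a, k + m₂ + 1, d, es b h₂ hΘ, o, ?_, by omega⟩
      rw [hΔ, Ctx.tail_add, Ctx.tail_substAt_zero_succ, add_assoc]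

theorem of_plug_esub_rename (L : List Tm) {n : ℕ} {t u : Tm} {Δ : Ctx} {τ : Ty} {m : ℕ}
    (h : DerU Δ (plug L (esub t (rename (· + (L.length + n)) u))) τ m) :
    ∃ (Γ Θ : Ctx) (M : List Ty) (a k : ℕ), DerU Γ (plug L (lam t)) (.arr M τ) a ∧
      DerU Θ u (.mult M) k ∧ Δ = Γ + Ctx.shift n Θ ∧ m = a + k := by
  induction L generalizing n Δ τ m with
  | nil =>
    rw [plug, List.length_nil, zero_add] at h
    cases h with
    | @es Γ Δ₂ _ _ _ M a k h₁ h₂ hM =>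
      obtain ⟨d, hΔ₂⟩ := of_rename_add h₂
      exact ⟨Ctx.tail Γ, _, M, a + 1, k, abs M h₁ hM, d, by rw [hΔ₂], by omega⟩
  | cons e L ih =>
    rw [plug, List.length_cons, add_right_comm, add_assoc] at h
    cases h with
    | @es _ Δ₂ _ _ _ N _ m₂ h₁ h₂ hN =>
      obtain ⟨Γ, Θ, M, a, k, d, b, hΔ, s⟩ := ih h₁
      have hΓ : ↑N = Γ 0 := by
        rw [hN, hΔ, Pi.add_apply, Ctx.shift_succ_apply_zero, add_zero]
      refine ⟨Ctx.tail Γ + Δ₂, Θ, M, a + m₂ + 1, k, es d h₂ hΓ, b, ?_, by omega⟩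
      rw [hΔ, Ctx.tail_add, Ctx.tail_shift_succ]
      abel

theorem plug_bang_of_plug (L : List Tm) {t : Tm} {Δ : Ctx} {τ : Ty} {m : ℕ}
    (h : DerU Δ (plug L t) τ m) : DerU Δ (plug L (bang t)) (.mult [τ]) m := by
  induction L generalizing Δ τ m with
  | nil => exact bang_singleton h
  | cons e L ih =>
    cases h with
    | es h₁ h₂ hM => exact es (ih h₁) h₂ hM

end DerU

theorem Root.weighted_subject_expansion {r : Rule} {t t' : Tm} {Γ : Ctx} {τ : Ty} {n' : ℕ}
    (hr : Root r t t') (h : DerU Γ t' τ n') : ∃ n : ℕ, DerU Γ t τ n ∧ n > n' := by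
  cases hr with
  | dB L t u =>
    obtain ⟨Γ₀, Θ, M, a, k, d, b, rfl, rfl⟩ := DerU.of_plug_esub_rename L (n := 0) h
    exact ⟨a + k + 1, by simpa [Ctx.shift_zero] using d.app b, by omega⟩
  | sb L t u =>
    obtain ⟨Γ₀, Θ, M, a, k, d, b, o, rfl, s⟩ := DerU.of_plug_substIn L (n := 0) h
    exact ⟨a + k + 1, by simpa [Ctx.substAt_zero_zero] using d.es b o, by omega⟩
  | db L t => exact ⟨n' + 1, (DerU.plug_bang_of_plug L h).dr, by omega⟩

theorem Step.weighted_subject_expansion {r : Rule} {t t' : Tm} (hs : Step r t t') :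
    ∀ {Γ : Ctx} {τ : Ty} {n' : ℕ}, DerU Γ t' τ n' → ∃ n : ℕ, DerU Γ t τ n ∧ n > n' := by
  induction hs with
  | root hr => exact hr.weighted_subject_expansion
  | appL u _ ih =>
    intro _ _ _ h
    cases h with
    | app h₁ h₂ =>
      obtain ⟨n, d, hn⟩ := ih h₁
      exact ⟨_, d.app h₂, by omega⟩
  | appR t _ ih =>
    intro _ _ _ h
    cases h with
    | app h₁ h₂ =>
      obtain ⟨n, d, hn⟩ := ih h₂
      exact ⟨_, h₁.app d, by omega⟩
  | lam _ ih =>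
    intro _ _ _ h
    cases h with
    | abs M h hM =>
      obtain ⟨n, d, hn⟩ := ih h
      exact ⟨_, d.abs M hM, by omega⟩
  | der _ ih =>
    intro _ _ _ h
    cases h with
    | dr h =>
      obtain ⟨n, d, hn⟩ := ih h
      exact ⟨_, d.dr, by omega⟩
  | esubL u _ ih =>
    intro _ _ _ h
    cases h with
    | es h₁ h₂ hM =>
      obtain ⟨n, d, hn⟩ := ih h₁
      exact ⟨_, d.es h₂ hM, by omega⟩
  | esubR t _ ih =>
    intro _ _ _ h
    cases h with
    | es h₁ h₂ hM =>
      obtain ⟨n, d, hn⟩ := ih h₂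
      exact ⟨_, h₁.es d hM, by omega⟩

/-- **Weighted subject expansion for system 𝒰** (Lemma 9): if `Γ ⊢ t' : τ`
has a derivation of size `n'` and `t →w t'`, then `Γ ⊢ t : τ` has a
derivation of size `n > n'`. -/
theorem weighted_subject_expansion {Γ : Ctx} {t t' : Tm} {τ : Ty} {n' : ℕ}
    (h : DerU Γ t' τ n') (hs : StepW t t') :
    ∃ n : ℕ, DerU Γ t τ n ∧ n > n' := by
  obtain ⟨r, hs⟩ := hs
  exact hs.weighted_subject_expansion h
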